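/- arXiv:1704.04848 — 3 statements merged into one kernel-verified Lean document; each statement's English description precedes it below -/
import Mathlib

section
/- Let n ≥ 1 be an integer and λ > 0, μ > 0 reals. Define f(k) = (1/μ)(H(n) − H(n−k)) + 1/(kλ) for k ∈ {1,…,n}, where H(m) = ∑_{l=1}^{m} 1/l (H(0) = 0). Then k* = min( ⌈ 2μn / (√((λ+μ)² + 4λμn) + λ + μ) ⌉, n ) satisfies k* ∈ {1,…,n} and f(k*) ≤ f(k) for all k ∈ {1,…,n}; that is, k* minimizes the expected AoI over all (n,k) replication schemes. -/
/-- The `m`-th harmonic number `H(m) = ∑_{l=1}^m 1/l`, with `H(0) = 0`. -/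
noncomputable def harmonicNumber (m : ℕ) : ℝ := ∑ l ∈ Finset.Icc 1 m, (1 : ℝ) / l

private lemma harm_succ (m : ℕ) :
    harmonicNumber (m + 1) = harmonicNumber m + 1 / (m + 1) := by
  unfold harmonicNumber
  rw [Finset.sum_Icc_succ_top (by omega)]
  push_cast
  ring

private lemma chain_down (f : ℕ → ℝ) : ∀ b a, a ≤ b →
    (∀ j, a ≤ j → j < b → f (j + 1) ≤ f j) → f b ≤ f a := by
  intro b
  induction b with
  | zero => intro a ha _; simp [Nat.le_zero.mp ha]
  | succ b ih =>
    intro a ha h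
    rcases Nat.lt_or_ge a (b + 1) with hlt | hge
    · have hab : a ≤ b := Nat.lt_succ_iff.mp hlt
      calc f (b + 1) ≤ f b := h b hab (Nat.lt_succ_self b)
        _ ≤ f a := ih a hab (fun j hj hjb => h j hj (Nat.lt_succ_of_lt hjb))
    · have : a = b + 1 := le_antisymm ha hge
      simp [this]

private lemma chain_up (f : ℕ → ℝ) (b a : ℕ) (hab : a ≤ b)
    (h : ∀ j, a ≤ j → j < b → f j ≤ f (j + 1)) : f a ≤ f b := by
  have := chain_down (fun k => -f k) b a hab (fun j hj hjb => by
    simpa using h j hj hjb)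
  simpa using this

set_option maxHeartbeats 1000000

/-- The optimal number of responses
`k* = min(⌈2μn / (√((λ+μ)² + 4λμn) + λ + μ)⌉, n)` lies in `{1,…,n}` and minimizes the
expected AoI `f(k) = (1/μ)(H(n) − H(n−k)) + 1/(kλ)` over `k ∈ {1,…,n}`. -/
theorem optimal_replication_scheme (n : ℕ) (hn : 1 ≤ n) (lam mu : ℝ)
    (hlam : 0 < lam) (hmu : 0 < mu) :
    let f : ℕ → ℝ := fun k =>
      (1 / mu) * (harmonicNumber n - harmonicNumber (n - k)) + 1 / (k * lam)
    let kstar : ℕ :=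
      min ⌈2 * mu * n / (Real.sqrt ((lam + mu) ^ 2 + 4 * lam * mu * n) + lam + mu)⌉₊ n
    1 ≤ kstar ∧ kstar ≤ n ∧ ∀ k : ℕ, 1 ≤ k → k ≤ n → f kstar ≤ f k := by
  intro f kstar
  set s : ℝ := lam + mu with hs
  set D : ℝ := s ^ 2 + 4 * lam * mu * n with hD
  set r : ℝ := Real.sqrt D with hr
  set x : ℝ := 2 * mu * n / (r + lam + mu) with hxdef
  have hn1 : (1 : ℝ) ≤ n := by exact_mod_cast hn
  have hD0 : 0 ≤ D := by positivity
  have hr0 : 0 ≤ r := Real.sqrt_nonneg D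
  have hr2 : r ^ 2 = D := Real.sq_sqrt hD0
  have hden : 0 < r + lam + mu := by linarith
  have hxpos : 0 < x := by
    apply div_pos (by positivity) hden
  have hceil : kstar = min ⌈x⌉₊ n := rfl
  clear_value kstar
  -- key identity: lam * x^2 + (lam + mu) * x = mu * n
  have hxr : x * (r + lam + mu) = 2 * mu * n := by
    rw [hxdef]; field_simp
  have hrs : (r - s) * (r + s) = 4 * lam * mu * n := by
    nlinarith [hr2]
  have h2 : r - s = 2 * lam * x := by
    have h3 : (r - s) * (r + lam + mu) = (2 * lam * x) * (r + lam + mu) := by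
      have : (2 * lam * x) * (r + lam + mu) = 2 * lam * (2 * mu * n) := by
        rw [mul_assoc, hxr]
      rw [this]
      calc (r - s) * (r + lam + mu) = (r - s) * (r + s) := by rw [hs]; ring
        _ = 4 * lam * mu * n := hrs
        _ = 2 * lam * (2 * mu * n) := by ring
    exact mul_right_cancel₀ (ne_of_gt hden) h3
  have hx2 : lam * x ^ 2 + (lam + mu) * x = mu * n := by
    nlinarith [hxr, h2]
  -- discrete step relation: for 1 ≤ j < n,
  -- f (j+1) - f j = 1/(mu * (n - j)) - 1/(lam * j * (j+1))
  have hstep : ∀ j : ℕ, 1 ≤ j → j < n →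
      f (j + 1) - f j = 1 / (mu * ((n : ℝ) - j)) - 1 / (lam * j * (j + 1)) := by
    intro j hj1 hjn
    have hm : n - j = (n - (j + 1)) + 1 := by omega
    have hcast : ((n - (j + 1) : ℕ) : ℝ) + 1 = (n : ℝ) - j := by
      have : ((n - (j + 1) : ℕ) : ℝ) = (n : ℝ) - (j + 1) := by
        push_cast [Nat.cast_sub (by omega : j + 1 ≤ n)]; ring
      rw [this]; ring
    have hnj : (0 : ℝ) < (n : ℝ) - j := by
      have : (j : ℝ) < n := by exact_mod_cast hjn
      linarith
    have hjr : (0 : ℝ) < (j : ℝ) := by exact_mod_cast hj1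
    simp only [f, hm, harm_succ, hcast]
    push_cast
    field_simp
    ring
  -- monotone characterization
  have hdown : ∀ j : ℕ, 1 ≤ j → j < n → (j : ℝ) ≤ x → f (j + 1) ≤ f j := by
    intro j hj1 hjn hjx
    have hjr : (0 : ℝ) < (j : ℝ) := by exact_mod_cast hj1
    have hnj : (0 : ℝ) < (n : ℝ) - j := by
      have : (j : ℝ) < n := by exact_mod_cast hjn
      linarith
    have hsq : (j : ℝ) ^ 2 ≤ x ^ 2 := by nlinarith
    have hineq : lam * j * (j + 1) ≤ mu * ((n : ℝ) - j) := by
      nlinarith [hx2, mul_le_mul_of_nonneg_left hsq hlam.le,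
        mul_le_mul_of_nonneg_left hjx hlam.le, mul_le_mul_of_nonneg_left hjx hmu.le]
    have h1 : 1 / (mu * ((n : ℝ) - j)) ≤ 1 / (lam * j * (j + 1)) := by
      apply one_div_le_one_div_of_le (by positivity) hineq
    rw [← sub_nonpos, hstep j hj1 hjn]
    linarith
  have hup : ∀ j : ℕ, 1 ≤ j → j < n → x ≤ (j : ℝ) → f j ≤ f (j + 1) := by
    intro j hj1 hjn hjx
    have hjr : (0 : ℝ) < (j : ℝ) := by exact_mod_cast hj1
    have hnj : (0 : ℝ) < (n : ℝ) - j := by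
      have : (j : ℝ) < n := by exact_mod_cast hjn
      linarith
    have hsq : x ^ 2 ≤ (j : ℝ) ^ 2 := by nlinarith
    have hineq : mu * ((n : ℝ) - j) ≤ lam * j * (j + 1) := by
      nlinarith [hx2, mul_le_mul_of_nonneg_left hsq hlam.le,
        mul_le_mul_of_nonneg_left hjx hlam.le, mul_le_mul_of_nonneg_left hjx hmu.le]
    have h1 : 1 / (lam * j * (j + 1)) ≤ 1 / (mu * ((n : ℝ) - j)) := by
      apply one_div_le_one_div_of_le (by positivity) hineq
    rw [← sub_nonneg, hstep j hj1 hjn]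
    linarith
  have hc1 : 1 ≤ ⌈x⌉₊ := Nat.one_le_iff_ne_zero.mpr (by
    simp only [ne_eq, Nat.ceil_eq_zero, not_le]
    exact hxpos)
  have hk1 : 1 ≤ kstar := by
    rw [hceil]; exact le_min hc1 hn
  have hkn : kstar ≤ n := by rw [hceil]; exact min_le_right _ _
  refine ⟨hk1, hkn, ?_⟩
  intro k hk1' hkn'
  rcases le_or_gt k kstar with hle | hlt
  · -- f kstar ≤ f k by descending from k to kstar
    exact chain_down f kstar k hle (fun j hj hjk =>
      hdown j (le_trans hk1' hj)
        (lt_of_lt_of_le hjk hkn)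
        (by
          have hjc : j < ⌈x⌉₊ := lt_of_lt_of_le hjk (by rw [hceil]; exact min_le_left _ _)
          exact le_of_lt ((Nat.lt_ceil).mp hjc)))
  · -- kstar < k ≤ n; then kstar = ⌈x⌉₊ (since kstar < n)
    have hksn : kstar < n := lt_of_lt_of_le hlt hkn'
    have hkc : kstar = ⌈x⌉₊ := by
      rw [hceil] at hksn ⊢
      rcases le_total ⌈x⌉₊ n with h | h
      · simp [min_eq_left h]
      · omega
    exact chain_up f k kstar (le_of_lt hlt) (fun j hj hjk =>
      hup j (le_trans hk1 hj) (lt_of_lt_of_le hjk hkn')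
        (by
          have : x ≤ (⌈x⌉₊ : ℝ) := Nat.le_ceil x
          have hj' : (⌈x⌉₊ : ℝ) ≤ j := by exact_mod_cast hkc ▸ hj
          linarith))
end

section
/- Let n ≥ 2 be an integer and λ > 0, μ > 0 reals. Define f(k) = (1/μ)(H(n) − H(n−k)) + 1/(kλ) for k ∈ {1,…,n}, where H(m) = ∑_{l=1}^{m} 1/l (H(0) = 0). Then k = 1 is a minimizer of f over {1,…,n} (i.e., f(1) ≤ f(k) for all k ∈ {1,…,n}) if and only if λ ≥ μ(n−1)/2. -/
lemma harmonicNumber_eq_Ioc (m : ℕ) :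
    harmonicNumber m = ∑ l ∈ Finset.Ioc 0 m, (1 : ℝ) / l := by
  unfold harmonicNumber
  congr 1

lemma harmonicNumber_sub (b a : ℕ) (h : b ≤ a) :
    harmonicNumber a - harmonicNumber b = ∑ l ∈ Finset.Ioc b a, (1 : ℝ) / l := by
  have := Finset.sum_Ioc_consecutive (fun l : ℕ => (1 : ℝ) / l) (Nat.zero_le b) h
  rw [harmonicNumber_eq_Ioc, harmonicNumber_eq_Ioc]
  linarith

lemma harmonicNumber_succ (m : ℕ) :
    harmonicNumber (m + 1) = harmonicNumber m + 1 / (m + 1 : ℝ) := by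
  unfold harmonicNumber
  rw [Finset.sum_Icc_succ_top (by omega : 1 ≤ m + 1)]
  push_cast
  ring

lemma harmonicNumber_lower (b a : ℕ) (hb : b ≤ a) (ha : 1 ≤ a) :
    ((a : ℝ) - b) / a ≤ harmonicNumber a - harmonicNumber b := by
  rw [harmonicNumber_sub b a hb]
  have hcard : (Finset.Ioc b a).card = a - b := by simp
  have hbound : ∀ l ∈ Finset.Ioc b a, (1 : ℝ) / a ≤ 1 / l := by
    intro l hl
    rw [Finset.mem_Ioc] at hl
    have hl1 : (0 : ℝ) < l := by
      have : 0 < l := by omega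
      exact_mod_cast this
    apply one_div_le_one_div_of_le hl1
    exact_mod_cast hl.2
  have := Finset.card_nsmul_le_sum (Finset.Ioc b a) (fun l : ℕ => (1 : ℝ) / l)
    ((1 : ℝ) / a) hbound
  rw [hcard, nsmul_eq_mul] at this
  have hcast : ((a - b : ℕ) : ℝ) = (a : ℝ) - b := by
    rw [Nat.cast_sub hb]
  calc ((a : ℝ) - b) / a = ((a - b : ℕ) : ℝ) * (1 / a) := by rw [hcast]; ring
    _ ≤ _ := this

/-- For the expected AoI `f(k) = (1/μ)(H(n) − H(n−k)) + 1/(kλ)` with `n ≥ 2`, waiting for the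
first response only (`k = 1`) is optimal over `{1,…,n}` if and only if `λ ≥ μ(n−1)/2`. -/
theorem first_response_optimal_iff (n : ℕ) (hn : 2 ≤ n) (lam mu : ℝ)
    (hlam : 0 < lam) (hmu : 0 < mu) :
    let f : ℕ → ℝ := fun k =>
      (1 / mu) * (harmonicNumber n - harmonicNumber (n - k)) + 1 / (k * lam)
    (∀ k : ℕ, 1 ≤ k → k ≤ n → f 1 ≤ f k) ↔ lam ≥ mu * ((n : ℝ) - 1) / 2 := by
  intro f
  constructor
  · intro h
    have h2 := h 2 (by omega) hn
    simp only [f] at h2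
    have hsub : n - 1 = (n - 2) + 1 := by omega
    have hH : harmonicNumber (n - 1) - harmonicNumber (n - 2) = 1 / ((n : ℝ) - 1) := by
      rw [hsub, harmonicNumber_succ]
      have : ((n - 2 : ℕ) : ℝ) = (n : ℝ) - 2 := by
        rw [Nat.cast_sub hn]; norm_num
      rw [this]
      ring_nf
    have hn1 : (0 : ℝ) < (n : ℝ) - 1 := by
      have : (2 : ℝ) ≤ n := by exact_mod_cast hn
      linarith
    -- h2 : (1/mu)*(H n - H (n-1)) + 1/(1*lam) ≤ (1/mu)*(H n - H (n-2)) + 1/(2*lam)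
    have hx : (1 / mu) * (harmonicNumber n - harmonicNumber (n - 2)) -
        (1 / mu) * (harmonicNumber n - harmonicNumber (n - 1)) =
        (1 / mu) * (1 / ((n : ℝ) - 1)) := by
      rw [← hH]; ring
    have key : 1 / lam - 1 / (2 * lam) ≤ (1 / mu) * (1 / ((n : ℝ) - 1)) := by
      push_cast at h2
      have h1l : 1 / (1 * lam) = 1 / lam := by rw [one_mul]
      linarith
    have h3 : 1 / (2 * lam) = 1 / lam - 1 / (2 * lam) := by
      field_simp; ring
    rw [ge_iff_le, div_le_iff₀ (by norm_num : (0:ℝ) < 2)]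
    have hkey2 : 1 / (2 * lam) ≤ 1 / (mu * ((n : ℝ) - 1)) := by
      rw [h3]
      calc 1 / lam - 1 / (2 * lam) ≤ (1 / mu) * (1 / ((n : ℝ) - 1)) := key
        _ = 1 / (mu * ((n : ℝ) - 1)) := by rw [div_mul_div_comm]; ring_nf
    have := le_of_one_div_le_one_div (by positivity : (0:ℝ) < 2 * lam) hkey2
    linarith
  · intro hge k hk1 hkn
    simp only [f]
    rcases eq_or_lt_of_le hk1 with heq | hk2
    · rw [← heq]
    have hk2' : 2 ≤ k := hk2
    have hkR : (2 : ℝ) ≤ k := by exact_mod_cast hk2'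
    have hnR : (2 : ℝ) ≤ n := by exact_mod_cast hn
    have hsub1 : n - k ≤ n - 1 := by omega
    have hn1pos : (0 : ℝ) < (n : ℝ) - 1 := by linarith
    have hcastk : ((n - k : ℕ) : ℝ) = (n : ℝ) - k := by
      rw [Nat.cast_sub hkn]
    have hcast1 : ((n - 1 : ℕ) : ℝ) = (n : ℝ) - 1 := by
      rw [Nat.cast_sub (by omega)]; norm_num
    have hlow := harmonicNumber_lower (n - k) (n - 1) hsub1 (by omega)
    rw [hcastk, hcast1] at hlow
    have hlow' : ((k : ℝ) - 1) / ((n : ℝ) - 1) ≤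
        harmonicNumber (n - 1) - harmonicNumber (n - k) := by
      have : ((n : ℝ) - 1) - ((n : ℝ) - k) = (k : ℝ) - 1 := by ring
      rwa [this] at hlow
    -- key numeric fact: mu * (n - 1) ≤ k * lam
    have hmain : mu * ((n : ℝ) - 1) ≤ (k : ℝ) * lam := by
      have : mu * ((n : ℝ) - 1) ≤ 2 * lam := by
        rw [ge_iff_le, div_le_iff₀ (by norm_num : (0:ℝ) < 2)] at hge
        linarith
      nlinarith
    have hfrac : ((k : ℝ) - 1) / ((k : ℝ) * lam) ≤ ((k : ℝ) - 1) / (mu * ((n : ℝ) - 1)) := by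
      apply div_le_div_of_nonneg_left (by linarith) (by positivity) hmain
    have heq2 : ((k : ℝ) - 1) / (mu * ((n : ℝ) - 1)) =
        (1 / mu) * (((k : ℝ) - 1) / ((n : ℝ) - 1)) := by
      field_simp
    have hstep : ((k : ℝ) - 1) / ((k : ℝ) * lam) ≤
        (1 / mu) * (harmonicNumber (n - 1) - harmonicNumber (n - k)) := by
      calc ((k : ℝ) - 1) / ((k : ℝ) * lam)
          ≤ (1 / mu) * (((k : ℝ) - 1) / ((n : ℝ) - 1)) := by rw [← heq2]; exact hfrac
        _ ≤ _ := by
            apply mul_le_mul_of_nonneg_left hlow' (by positivity)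
    have hkpos : (0 : ℝ) < k := by linarith
    have hdiff : 1 / ((1 : ℕ) * lam) - 1 / ((k : ℝ) * lam) =
        ((k : ℝ) - 1) / ((k : ℝ) * lam) := by
      push_cast
      field_simp
    have hx2 : (1 / mu) * (harmonicNumber n - harmonicNumber (n - k)) -
        (1 / mu) * (harmonicNumber n - harmonicNumber (n - 1)) =
        (1 / mu) * (harmonicNumber (n - 1) - harmonicNumber (n - k)) := by ring
    push_cast
    push_cast at hdiff
    linarith [hstep, hdiff, hx2]
end

section
/- Let n ≥ 1 be an integer and λ > 0, a ≥ 0, h > 0 reals. Define g(k) = kh/(n+1) + a + 1/(kλ) for k ∈ {1,…,n}. Then k* = min( ⌈ 2(n+1) / (√(h²λ² + 4hλ(n+1)) + hλ) ⌉, n ) satisfies k* ∈ {1,…,n} and g(k*) ≤ g(k) for all k ∈ {1,…,n}. -/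
/-- For the expected AoI `g(k) = kh/(n+1) + a + 1/(kλ)` under uniformly distributed response
times, `k* = min(⌈2(n+1) / (√(h²λ² + 4hλ(n+1)) + hλ)⌉, n)` lies in `{1,…,n}` and minimizes
`g` over `{1,…,n}`. -/
theorem optimal_replication_uniform (n : ℕ) (hn : 1 ≤ n) (lam a h : ℝ)
    (hlam : 0 < lam) (ha : 0 ≤ a) (hh : 0 < h) :
    let g : ℕ → ℝ := fun k => k * h / ((n : ℝ) + 1) + a + 1 / (k * lam)
    let kstar : ℕ :=
      min ⌈2 * ((n : ℝ) + 1) /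
        (Real.sqrt (h ^ 2 * lam ^ 2 + 4 * h * lam * ((n : ℝ) + 1)) + h * lam)⌉₊ n
    1 ≤ kstar ∧ kstar ≤ n ∧ ∀ k : ℕ, 1 ≤ k → k ≤ n → g kstar ≤ g k := by
  intro g kstar
  have hn1 : (0:ℝ) < (n:ℝ) + 1 := by positivity
  set s := Real.sqrt (h ^ 2 * lam ^ 2 + 4 * h * lam * ((n : ℝ) + 1)) with hs
  have hsq : s ^ 2 = h ^ 2 * lam ^ 2 + 4 * h * lam * ((n : ℝ) + 1) :=
    Real.sq_sqrt (by positivity)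
  have hspos : 0 < s := Real.sqrt_pos.mpr (by positivity)
  have hden : 0 < s + h * lam := by positivity
  set E := 2 * ((n : ℝ) + 1) / (s + h * lam) with hE
  have hEpos : 0 < E := by positivity
  have hEeq : h * lam * (E * (E + 1)) = (n:ℝ) + 1 := by
    rw [hE]
    field_simp
    nlinarith [hsq]
  set m := ⌈E⌉₊ with hm
  have hm1 : 1 ≤ m := Nat.one_le_iff_ne_zero.mpr (by
    simp only [hm, ne_eq, Nat.ceil_eq_zero, not_le]; exact hEpos)
  have hks : kstar = min m n := rfl
  have hks1 : 1 ≤ kstar := by rw [hks]; exact le_min hm1 hn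
  have hksn : kstar ≤ n := by rw [hks]; exact min_le_right _ _
  refine ⟨hks1, hksn, ?_⟩
  have hdiff : ∀ j : ℕ, 1 ≤ j →
      g j - g (j+1) = ((n:ℝ) + 1 - h * lam * ((j:ℝ) * ((j:ℝ)+1))) /
        ((j:ℝ) * ((j:ℝ)+1) * lam * ((n:ℝ)+1)) := by
    intro j hj
    have hj0 : (0:ℝ) < j := by exact_mod_cast hj
    simp only [g]
    push_cast
    field_simp
    ring
  have dec : ∀ j : ℕ, 1 ≤ j → j < m → g (j+1) ≤ g j := by
    intro j hj hjm
    have hjE : (j:ℝ) < E := Nat.lt_ceil.mp hjm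
    have hj0 : (0:ℝ) < j := by exact_mod_cast hj
    have hle : h * lam * ((j:ℝ) * ((j:ℝ)+1)) ≤ (n:ℝ) + 1 := by
      rw [← hEeq]
      have hmono : (j:ℝ) * ((j:ℝ)+1) ≤ E * (E+1) := by nlinarith
      nlinarith [mul_pos hh hlam]
    have h0 : 0 ≤ g j - g (j+1) := by
      rw [hdiff j hj]
      apply div_nonneg
      · linarith
      · positivity
    linarith
  have inc : ∀ j : ℕ, m ≤ j → g j ≤ g (j+1) := by
    intro j hj
    have hj1 : 1 ≤ j := le_trans hm1 hj
    have hEj : E ≤ (j:ℝ) := by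
      have := Nat.ceil_le.mp (hm ▸ hj)
      exact_mod_cast this
    have hge : (n:ℝ) + 1 ≤ h * lam * ((j:ℝ) * ((j:ℝ)+1)) := by
      rw [← hEeq]
      have hmono : E * (E+1) ≤ (j:ℝ) * ((j:ℝ)+1) := by nlinarith
      nlinarith [mul_pos hh hlam]
    have h0 : g j - g (j+1) ≤ 0 := by
      rw [hdiff j hj1]
      apply div_nonpos_of_nonpos_of_nonneg
      · linarith
      · positivity
    linarith
  have up : ∀ k : ℕ, m ≤ k → g m ≤ g k := by
    intro k hk
    induction k, hk using Nat.le_induction with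
    | base => exact le_refl _
    | succ k hk ih => exact le_trans ih (inc k hk)
  have down : ∀ d : ℕ, 1 ≤ kstar - d → g kstar ≤ g (kstar - d) := by
    intro d
    induction d with
    | zero => intro _; simp
    | succ d ih =>
      intro hd
      have h1 : 1 ≤ kstar - d := by omega
      have h2 : kstar - (d+1) + 1 = kstar - d := by omega
      have h3 : kstar - (d+1) < m := by omega
      calc g kstar ≤ g (kstar - d) := ih h1
        _ = g (kstar - (d+1) + 1) := by rw [h2]
        _ ≤ g (kstar - (d+1)) := dec _ hd h3
  intro k hk1 hkn
  rcases le_or_gt k kstar with hle | hlt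
  · have hdn := down (kstar - k) (by omega)
    have hkk : kstar - (kstar - k) = k := by omega
    rwa [hkk] at hdn
  · have hkm : kstar = m := by omega
    rw [hkm]
    exact up k (by omega)
end
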